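/- arXiv:2305.06676 — 3 statements merged into one kernel-verified Lean document; each statement's English description precedes it below -/
import Mathlib

section
/- Let X be a first countable T1 topological space, let A ⊆ X, and let a be a point in the closure of A with a ∉ A. If DC(A) holds, then there is a sequence (a_n)_{n∈ℕ} of pairwise distinct elements of A converging to a. In particular, there is an injection from ℕ into A. -/
/-- `DC X`: Dependent Choice for the set `X`. -/
def DC {α : Type*} (X : Set α) : Prop :=
  ∀ R : α → α → Prop,
    (∀ x y, R x y → x ∈ X ∧ y ∈ X) →
    (∃ x y, R x y) →
    (∀ x ∈ X, ∃ y ∈ X, R x y) →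
    ∃ f : ℕ → α, (∀ n, f n ∈ X) ∧ ∀ n, R (f n) (f (n + 1))

/-- If `X` is a first countable T1 space, `a ∈ closure A \ A` and `DC(A)` holds, then
there is an injective sequence of elements of `A` converging to `a`; in particular,
`ℕ` injects into `A`. -/
theorem exists_injective_seq_tendsto_of_dc {X : Type*} [TopologicalSpace X]
    [FirstCountableTopology X] [T1Space X] (A : Set X) (a : X)
    (ha : a ∈ closure A) (ha' : a ∉ A) (hdc : DC A) :
    (∃ f : ℕ → X, (∀ n, f n ∈ A) ∧ Function.Injective f ∧
      Filter.Tendsto f Filter.atTop (nhds a)) ∧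
    ∃ g : ℕ → A, Function.Injective g := by
  obtain ⟨b, hb⟩ := (nhds a).exists_antitone_basis
  have key : ∀ (s : Finset X) (n : ℕ), ∃ x, x ∈ A ∧ x ∈ b n ∧ x ∉ s := by
    intro s n
    have h1 : b n ∈ nhds a := hb.mem n
    have h2 : ((↑s \ {a} : Set X))ᶜ ∈ nhds a := by
      refine IsOpen.mem_nhds ?_ ?_
      · exact (Set.Finite.diff s.finite_toSet).isClosed.isOpen_compl
      · simp
    obtain ⟨x, hxU, hxA⟩ := mem_closure_iff_nhds.mp ha _ (Filter.inter_mem h1 h2)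
    refine ⟨x, hxA, hxU.1, fun hxs => hxU.2 ⟨hxs, ?_⟩⟩
    rintro rfl; exact ha' hxA
  -- recursively choose points
  letI : DecidableEq X := Classical.decEq X
  let F : ℕ → Finset X × X := fun n => Nat.rec
    (Prod.mk {Classical.choose (key ∅ 0)} (Classical.choose (key ∅ 0)))
    (fun n p => Prod.mk (insert (Classical.choose (key p.1 (n+1))) p.1)
      (Classical.choose (key p.1 (n+1)))) n
  have hF0 : ∀ n, (F n).2 ∈ A ∧ (F n).2 ∈ b n := by
    intro n
    cases n with
    | zero => exact ⟨(Classical.choose_spec (key ∅ 0)).1, (Classical.choose_spec (key ∅ 0)).2.1⟩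
    | succ m =>
        exact ⟨(Classical.choose_spec (key (F m).1 (m+1))).1,
          (Classical.choose_spec (key (F m).1 (m+1))).2.1⟩
  have hFmem : ∀ n, (F n).2 ∈ (F n).1 := by
    intro n
    cases n with
    | zero => simp [F]
    | succ m => exact Finset.mem_insert_self _ _

  have hFnot : ∀ n, (F (n+1)).2 ∉ (F n).1 := fun n =>
    (Classical.choose_spec (key (F n).1 (n+1))).2.2
  have hFmono : ∀ m n, m ≤ n → (F m).1 ⊆ (F n).1 := by
    intro m n h
    induction n with
    | zero => simp [Nat.le_zero.mp h]
    | succ k ih =>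
        rcases Nat.lt_or_ge m (k+1) with h' | h'
        · exact (ih (Nat.lt_succ_iff.mp h')).trans (Finset.subset_insert _ _)
        · have : m = k + 1 := le_antisymm h h'
          simp [this]
  have hinj : Function.Injective fun n => (F n).2 := by
    have hne : ∀ m n, m < n → (F n).2 ≠ (F m).2 := by
      intro m n hmn heq
      obtain ⟨k, rfl⟩ := Nat.exists_eq_add_of_lt hmn
      have hm : (F m).2 ∈ (F (m + k)).1 := hFmono m (m+k) (Nat.le_add_right _ _) (hFmem m)
      exact hFnot (m+k) (heq ▸ hm)
    intro m n h
    rcases lt_trichotomy m n with h' | h' | h'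
    · exact absurd h.symm (hne m n h')
    · exact h'
    · exact absurd h (hne n m h')
  refine ⟨⟨fun n => (F n).2, fun n => (hF0 n).1, hinj, hb.tendsto fun n => (hF0 n).2⟩, ?_⟩
  exact ⟨fun n => ⟨(F n).2, (hF0 n).1⟩, fun m n h => hinj (congrArg Subtype.val h)⟩
end

section
/- Let X be a set. If there is an injection from X × {0,1} into X, then there is an injection from X × ℕ into X. -/
/-- If there is an injection from `X × {0,1}` into `X`, then there is an injection
from `X × ℕ` into `X`. -/
theorem prod_nat_injects_of_prod_two_injects {α : Type*} (X : Set α)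
    (h : ∃ f : ↥X × Bool → ↥X, Function.Injective f) :
    ∃ g : ↥X × ℕ → ↥X, Function.Injective g := by
  obtain ⟨f, hf⟩ := h
  rcases isEmpty_or_nonempty ↥X with he | hn
  · exact ⟨fun p => (he.false p.1).elim, fun p => (he.false p.1).elim⟩
  have hinf : Infinite ↥X := by
    by_contra hfin
    have : Finite ↥X := not_infinite_iff_finite.mp hfin
    have := Fintype.ofFinite ↥X
    have hc := Fintype.card_le_of_injective f hf
    have hpos : 0 < Fintype.card ↥X := Fintype.card_pos
    rw [Fintype.card_prod, Fintype.card_bool] at hc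
    omega
  have hle : Cardinal.mk (↥X × ℕ) ≤ Cardinal.mk ↥X := by
    simp only [Cardinal.mk_prod, Cardinal.mk_nat, Cardinal.lift_aleph0, Cardinal.lift_id, Cardinal.lift_id']
    rw [
      Cardinal.mul_aleph0_eq (Cardinal.infinite_iff.mp hinf)]
  obtain ⟨g⟩ := Cardinal.le_def _ _ |>.mp hle
  exact ⟨g, g.injective⟩
end

section
/- Let I be a set and let (X_i)_{i∈I} be a family of nonempty sets. Assume AC_I(P(I)), i.e., every I-indexed family of nonempty subsets of the power set of I has a choice function. Then there is a family (Y_i)_{i∈I} such that for every i ∈ I, Y_i is a nonempty subset of X_i, and for all i, j ∈ I either Y_i = Y_j or Y_i ∩ Y_j = ∅. -/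
/-- If `(X i)` is a family of nonempty sets indexed by `ι`, and every `ι`-indexed
family of nonempty subsets of the power set of `ι` has a choice function, then
there is a family `(Y i)` of nonempty sets with `Y i ⊆ X i` such that any two of
the `Y i` are either equal or disjoint. -/
theorem exists_equal_or_disjoint_subfamily {ι α : Type*} (X : ι → Set α)
    (hX : ∀ i, (X i).Nonempty)
    (hAC : ∀ A : ι → Set (Set ι), (∀ i, (A i).Nonempty) →
      ∃ a : ι → Set ι, ∀ i, a i ∈ A i) :
    ∃ Y : ι → Set α, (∀ i, (Y i).Nonempty ∧ Y i ⊆ X i) ∧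
      ∀ i j, Y i = Y j ∨ Disjoint (Y i) (Y j) := by
  set tr : α → Set ι := fun x => {j | x ∈ X j} with htr
  obtain ⟨a, ha⟩ := hAC (fun i => tr '' X i) (fun i => (hX i).image tr)
  refine ⟨fun i => {x | tr x = a i}, fun i => ?_, fun i j => ?_⟩
  · obtain ⟨x, hx, hxa⟩ := ha i
    constructor
    · exact ⟨x, hxa⟩
    · intro y hy
      have : i ∈ a i := hxa ▸ hx
      have : i ∈ tr y := hy ▸ this
      exact this
  · by_cases h : a i = a j
    · left; ext x; simp [h]
    · right
      rw [Set.disjoint_left]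
      intro x hxi hxj
      exact h (hxi ▸ hxj ▸ rfl)
end
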